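/- Assume hypotheses (H). Let x be a vertex of Γ and let y, z be vertices at distance 2 from x. Then y and z are adjacent if and only if the subgraph of Γ induced on the set of common neighbours of x, y and z is isomorphic to a single edge K_2 or to the disjoint union of two edges 2·K_2. -/

import Mathlib

open SimpleGraph

/-- The `(n × m)`-grid: the Cartesian product of the complete graphs `K_n` and `K_m`. -/
def gridGraph (n m : ℕ) : SimpleGraph (Fin n × Fin m) where
  Adj a b := a ≠ b ∧ (a.1 = b.1 ∨ a.2 = b.2)
  symm := ⟨fun a b h => ⟨h.1.symm, h.2.imp Eq.symm Eq.symm⟩⟩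
  loopless := ⟨fun a h => h.1 rfl⟩

/-- The disjoint union of two edges, `2·K₂`: vertices `{0,1,2,3}` with edges `01` and `23`. -/
def twoK2 : SimpleGraph (Fin 4) where
  Adj a b := a ≠ b ∧ a.val / 2 = b.val / 2
  symm := ⟨fun a b h => ⟨h.1.symm, h.2.symm⟩⟩
  loopless := ⟨fun a h => h.1 rfl⟩

/-!
Work in the local grid of `y`. The six common neighbours of `x` and `y` form a set `F` of grid
points in which every point has exactly two `F`-neighbours, and these two are non-adjacent (they
are the common neighbours of `x` and `y` in the local grid of that point). Hence every row and
every column of the grid meets `F` in no point or in two, and `F` spans three rows and three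
columns. The points of these lines outside `F` are at distance 2 from `x`; as the
`(n - 3) * (m - 3)` points off the lines already account for all neighbours of `y` at distance 3,
there are no other neighbours of `y` at distance 2. So a neighbour `z` of `y` at distance 2 from
`x` lies on a row or a column of `F`, and its common neighbours with `x` and `y` are the points of
`F` on its row and on its column: one edge, or two edges with no edge between them.

Conversely, if `y ≠ z` are not adjacent then `x, y, z` are pairwise non-adjacent, and no edge
`w w'` joins two of their common neighbours: in the local grid of `w`, the vertex `w'` would be
adjacent to three points in distinct rows and columns. For `y = z` the set has six vertices.
-/

namespace SimpleGraph

variable {V W : Type*} {G : SimpleGraph V} {H : SimpleGraph W}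

lemma dist_eq_two_iff {u v : V} :
    G.dist u v = 2 ↔ u ≠ v ∧ ¬ G.Adj u v ∧ (G.commonNeighbors u v).Nonempty := by
  rw [← edist_eq_two_iff, dist, ENat.toNat_eq_iff two_ne_zero]
  rfl

lemma Iso.exists_embedding_range_eq {s : Set V} (φ : G.induce s ≃g H) :
    ∃ e : H ↪g G, Set.range e = s := by
  refine ⟨(Embedding.induce s).comp φ.symm.toEmbedding, ?_⟩
  change Set.range (Subtype.val ∘ φ.symm) = s
  rw [Set.range_comp, φ.symm.surjective.range_eq, Set.image_univ, Subtype.range_coe]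

section Chart

variable {v : V} {e : H ↪g G}

lemma Embedding.exists_apply_eq_of_adj (he : Set.range e = G.neighborSet v) {t : V}
    (ht : G.Adj v t) : ∃ p, e p = t :=
  Set.mem_range.1 (he.symm ▸ ht : t ∈ Set.range e)

lemma Embedding.adj_apply_of_range_eq (he : Set.range e = G.neighborSet v) (p : W) :
    G.Adj v (e p) :=
  (he ▸ Set.mem_range_self p : e p ∈ G.neighborSet v)

lemma Embedding.ncard_setOf_adj_and [Fintype W] (he : Set.range e = G.neighborSet v)
    (P : V → Prop) [DecidablePred P] :
    {t | G.Adj v t ∧ P t}.ncard = (Finset.univ.filter fun p => P (e p)).card := by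
  have : {t | G.Adj v t ∧ P t} = e '' ↑(Finset.univ.filter fun p => P (e p)) := by
    ext t
    constructor
    · rintro ⟨hvt, hPt⟩
      obtain ⟨p, rfl⟩ := e.exists_apply_eq_of_adj he hvt
      exact ⟨p, by simpa using hPt, rfl⟩
    · rintro ⟨p, hp, rfl⟩
      exact ⟨e.adj_apply_of_range_eq he p, by simpa using hp⟩
  rw [this, Set.ncard_image_of_injective _ e.injective, Set.ncard_coe_finset]

end Chart

lemma exists_embedding_top_fin_two {a b : V} (hab : G.Adj a b) :
    ∃ f : (⊤ : SimpleGraph (Fin 2)) ↪g G, Set.range f = {a, b} := by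
  refine ⟨⟨⟨![a, b], fun i j hij => ?_⟩, fun {i j} => ?_⟩, ?_⟩
  · fin_cases i <;> fin_cases j <;> simp_all [hab.ne, hab.ne.symm]
  · change G.Adj (![a, b] i) (![a, b] j) ↔ _
    fin_cases i <;> fin_cases j <;> simp [hab, hab.symm]
  · change Set.range ![a, b] = _
    simp only [Matrix.range_cons, Matrix.range_empty, Set.union_empty, Set.singleton_union]

lemma exists_embedding_twoK2 {a b c d : V} (hab : G.Adj a b) (hcd : G.Adj c d)
    (hsep : ∀ u ∈ ({a, b} : Set V), ∀ v ∈ ({c, d} : Set V), u ≠ v ∧ ¬ G.Adj u v) :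
    ∃ f : twoK2 ↪g G, Set.range f = {a, b, c, d} := by
  obtain ⟨hac, nac⟩ := hsep a (by simp) c (by simp)
  obtain ⟨had, nad⟩ := hsep a (by simp) d (by simp)
  obtain ⟨hbc, nbc⟩ := hsep b (by simp) c (by simp)
  obtain ⟨hbd, nbd⟩ := hsep b (by simp) d (by simp)
  refine ⟨⟨⟨![a, b, c, d], fun i j hij => ?_⟩, fun {i j} => ?_⟩, ?_⟩
  · fin_cases i <;> fin_cases j <;>
      simp_all [hab.ne, hab.ne.symm, hcd.ne, hcd.ne.symm, eq_comm]
  · change G.Adj (![a, b, c, d] i) (![a, b, c, d] j) ↔ _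
    fin_cases i <;> fin_cases j <;>
      simp [twoK2, hab, hab.symm, hcd, hcd.symm, nac, nad, nbc, nbd, G.adj_comm c, G.adj_comm d]
  · change Set.range ![a, b, c, d] = _
    simp only [Matrix.range_cons, Matrix.range_empty, Set.union_empty, Set.singleton_union]

lemma Embedding.nonempty_induce_iso_of_range_eq (f : H ↪g G) {s : Set V}
    (hf : Set.range f = s) : Nonempty (G.induce s ≃g H) :=
  hf ▸ ⟨f.isoInduceRange.symm⟩

lemma exists_adj_of_induce_iso {s : Set V} (φ : G.induce s ≃g H) {a b : W} (hab : H.Adj a b) :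
    ∃ u ∈ s, ∃ v ∈ s, G.Adj u v :=
  ⟨_, (φ.symm a).2, _, (φ.symm b).2, φ.symm.map_adj_iff.2 hab⟩

lemma ncard_eq_of_induce_iso {s : Set V} (φ : G.induce s ≃g H) : s.ncard = Nat.card W := by
  rw [← Nat.card_coe_set_eq]
  exact Nat.card_congr φ.toEquiv

end SimpleGraph

section Fibres

variable {α β γ : Type*} [DecidableEq α] [DecidableEq β]

def FibresArePairs (f : α → β) (F : Finset α) : Prop :=
  ∀ p ∈ F, ∃ q ≠ p, F.filter (fun r => f r = f p) = {p, q}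

lemma FibresArePairs.card_eq_two_mul {f : α → β} {F : Finset α} (h : FibresArePairs f F) :
    F.card = 2 * (F.image f).card := by
  rw [Finset.card_eq_sum_card_image f F, mul_comm, ← smul_eq_mul, ← Finset.sum_const]
  refine Finset.sum_congr rfl fun b hb => ?_
  obtain ⟨p, hp, rfl⟩ := Finset.mem_image.1 hb
  obtain ⟨q, hqp, hpair⟩ := h p hp
  rw [hpair, Finset.card_pair hqp.symm]

lemma FibresArePairs.of_collinear_eq_pair (f : α → β) (g : α → γ) {F : Finset α}
    (h : ∀ p ∈ F, ∃ c₁ c₂, f c₁ ≠ f c₂ ∧ g c₁ ≠ g c₂ ∧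
      ∀ q, q ∈ F ∧ q ≠ p ∧ (f q = f p ∨ g q = g p) ↔ q = c₁ ∨ q = c₂) :
    FibresArePairs f F := by
  have key : ∀ p ∈ F, ∀ c c', f c ≠ f c' →
      (∀ q, q ∈ F ∧ q ≠ p ∧ (f q = f p ∨ g q = g p) ↔ q = c ∨ q = c') → f c = f p →
      ∃ q ≠ p, F.filter (fun r => f r = f p) = {p, q} := by
    intro p hp c c' hcc' hnbr hcp
    obtain ⟨hcF, hcp', -⟩ := (hnbr c).2 (Or.inl rfl)
    refine ⟨c, hcp', Finset.ext fun r => ?_⟩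
    simp only [Finset.mem_filter, Finset.mem_insert, Finset.mem_singleton]
    constructor
    · rintro ⟨hrF, hr⟩
      by_cases hrp : r = p
      · exact Or.inl hrp
      · rcases (hnbr r).1 ⟨hrF, hrp, Or.inl hr⟩ with rfl | rfl
        · exact Or.inr rfl
        · exact absurd (hcp.trans hr.symm) hcc'
    · rintro (rfl | rfl)
      · exact ⟨hp, rfl⟩
      · exact ⟨hcF, hcp⟩
  intro p hp
  obtain ⟨c₁, c₂, hf, hg, hnbr⟩ := h p hp
  -- Each `cᵢ` shares its `f`- or its `g`-value with `p`, and they share neither with each other.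
  by_cases h₁ : f c₁ = f p
  · exact key p hp c₁ c₂ hf hnbr h₁
  refine key p hp c₂ c₁ (Ne.symm hf) (fun q => (hnbr q).trans or_comm) ?_
  have hg₁ : g c₁ = g p := ((hnbr c₁).2 (Or.inl rfl)).2.2.resolve_left h₁
  exact ((hnbr c₂).2 (Or.inr rfl)).2.2.resolve_right fun hg₂ => hg (hg₁.trans hg₂.symm)

lemma FibresArePairs.setOf_eq_empty_or_pair {f : α → β} {F : Finset α} (h : FibresArePairs f F)
    (y : β) :
    {q | q ∈ F ∧ f q = y} = ∅ ∨ ∃ a b, a ≠ b ∧ f a = f b ∧ {q | q ∈ F ∧ f q = y} = {a, b} := by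
  refine or_iff_not_imp_left.2 fun hne => ?_
  obtain ⟨a, ha, rfl⟩ := Set.nonempty_iff_ne_empty.2 hne
  obtain ⟨b, hba, hpair⟩ := h a ha
  have hb : b ∈ F.filter (fun r => f r = f a) := hpair ▸ Finset.mem_insert_of_mem (by simp)
  exact ⟨a, b, hba.symm, (Finset.mem_filter.1 hb).2.symm,
    Set.ext fun q => by simpa using Finset.ext_iff.1 hpair q⟩

end Fibres

namespace gridGraph

variable {n m : ℕ}

lemma fst_ne_and_snd_ne_of_not_adj {P Q : Fin n × Fin m} (hne : P ≠ Q)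
    (h : ¬ (gridGraph n m).Adj P Q) : P.1 ≠ Q.1 ∧ P.2 ≠ Q.2 :=
  not_or.1 fun h' => h ⟨hne, h'⟩

lemma adj_and_adj_iff {P Q T : Fin n × Fin m} (h₁ : P.1 ≠ Q.1) (h₂ : P.2 ≠ Q.2) :
    (gridGraph n m).Adj P T ∧ (gridGraph n m).Adj Q T ↔ T = (P.1, Q.2) ∨ T = (Q.1, P.2) := by
  simp only [gridGraph, Prod.ext_iff]
  grind

lemma not_adj_all_of_pairwise_ne {P Q R T : Fin n × Fin m}
    (hPQ : P.1 ≠ Q.1 ∧ P.2 ≠ Q.2) (hPR : P.1 ≠ R.1 ∧ P.2 ≠ R.2) (hQR : Q.1 ≠ R.1 ∧ Q.2 ≠ R.2) :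
    ¬ ((gridGraph n m).Adj T P ∧ (gridGraph n m).Adj T Q ∧ (gridGraph n m).Adj T R) := by
  simp only [gridGraph]
  grind

variable {F : Finset (Fin n × Fin m)} {P : Fin n × Fin m}

def linesThrough (F : Finset (Fin n × Fin m)) : Finset (Fin n × Fin m) :=
  Finset.univ.filter fun p => p.1 ∈ F.image Prod.fst ∨ p.2 ∈ F.image Prod.snd

lemma card_compl_linesThrough (F : Finset (Fin n × Fin m)) :
    (linesThrough F)ᶜ.card = (n - (F.image Prod.fst).card) * (m - (F.image Prod.snd).card) := by
  have : (linesThrough F)ᶜ = (F.image Prod.fst)ᶜ ×ˢ (F.image Prod.snd)ᶜ := by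
    ext p
    simp [linesThrough]
  rw [this, Finset.card_product, Finset.card_compl, Finset.card_compl, Fintype.card_fin,
    Fintype.card_fin]

lemma exists_adj_of_mem_linesThrough (hP : P ∈ linesThrough F) (hPF : P ∉ F) :
    ∃ f ∈ F, (gridGraph n m).Adj P f := by
  simp only [linesThrough, Finset.mem_filter, Finset.mem_univ, true_and, Finset.mem_image] at hP
  rcases hP with ⟨f, hf, h⟩ | ⟨f, hf, h⟩
  · exact ⟨f, hf, fun hPf => hPF (hPf ▸ hf), Or.inl h.symm⟩
  · exact ⟨f, hf, fun hPf => hPF (hPf ▸ hf), Or.inr h.symm⟩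

lemma fibresArePairs_of_forall_neighbors_eq_pair
    (h : ∀ p ∈ F, ∃ c₁ c₂, c₁ ≠ c₂ ∧ ¬ (gridGraph n m).Adj c₁ c₂ ∧
      ∀ q, q ∈ F ∧ (gridGraph n m).Adj p q ↔ q = c₁ ∨ q = c₂) :
    FibresArePairs Prod.fst F ∧ FibresArePairs Prod.snd F := by
  have h' : ∀ p ∈ F, ∃ c₁ c₂ : Fin n × Fin m, c₁.1 ≠ c₂.1 ∧ c₁.2 ≠ c₂.2 ∧
      ∀ q, q ∈ F ∧ q ≠ p ∧ (q.1 = p.1 ∨ q.2 = p.2) ↔ q = c₁ ∨ q = c₂ := by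
    intro p hp
    obtain ⟨c₁, c₂, hne, hnadj, hnbr⟩ := h p hp
    refine ⟨c₁, c₂, fst_ne_and_snd_ne_of_not_adj hne hnadj |>.1,
      fst_ne_and_snd_ne_of_not_adj hne hnadj |>.2, fun q => (Iff.trans ?_ (hnbr q))⟩
    simp only [gridGraph, ne_comm, eq_comm]
  refine ⟨FibresArePairs.of_collinear_eq_pair Prod.fst Prod.snd h',
    FibresArePairs.of_collinear_eq_pair Prod.snd Prod.fst fun p hp => ?_⟩
  obtain ⟨c₁, c₂, h₁, h₂, hnbr⟩ := h' p hp
  exact ⟨c₁, c₂, h₂, h₁, fun q => Iff.trans (by rw [or_comm]) (hnbr q)⟩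

lemma ne_and_not_adj_of_mem_row_of_mem_col (hPF : P ∉ F) {u v : Fin n × Fin m} (hu : u ∈ F)
    (hv : v ∈ F) (hu₁ : u.1 = P.1) (hv₂ : v.2 = P.2) : u ≠ v ∧ ¬ (gridGraph n m).Adj u v := by
  have h₁ : u.1 ≠ v.1 := fun h => hPF (Prod.ext (h ▸ hu₁) hv₂ ▸ hv)
  have h₂ : u.2 ≠ v.2 := fun h => hPF (Prod.ext hu₁ (h ▸ hv₂) ▸ hu)
  exact ⟨fun h => h₁ (congrArg Prod.fst h), fun h => h.2.elim h₁ h₂⟩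

lemma setOf_mem_and_adj_eq (hPF : P ∉ F) :
    {q | q ∈ F ∧ (gridGraph n m).Adj P q} = {q | q ∈ F ∧ q.1 = P.1} ∪ {q | q ∈ F ∧ q.2 = P.2} := by
  ext q
  simp only [gridGraph, Set.mem_ofPred_eq, Set.mem_union]
  have : q ∈ F → P ≠ q := fun hq hPq => hPF (hPq ▸ hq)
  grind

lemma exists_embedding_range_eq_neighbors (hfst : FibresArePairs Prod.fst F)
    (hsnd : FibresArePairs Prod.snd F) (hPF : P ∉ F) (hP : P ∈ linesThrough F) :
    (∃ f : (⊤ : SimpleGraph (Fin 2)) ↪g gridGraph n m,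
        Set.range f = {q | q ∈ F ∧ (gridGraph n m).Adj P q}) ∨
      ∃ f : twoK2 ↪g gridGraph n m, Set.range f = {q | q ∈ F ∧ (gridGraph n m).Adj P q} := by
  obtain ⟨f, hfF, hPf⟩ := exists_adj_of_mem_linesThrough hP hPF
  have hf : f ∈ {q | q ∈ F ∧ (gridGraph n m).Adj P q} := ⟨hfF, hPf⟩
  rw [setOf_mem_and_adj_eq hPF] at hf ⊢
  rcases hfst.setOf_eq_empty_or_pair P.1 with hrow | ⟨a, b, hab, hab₁, hrow⟩ <;>
    rcases hsnd.setOf_eq_empty_or_pair P.2 with hcol | ⟨c, d, hcd, hcd₂, hcol⟩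
  · simp [hrow, hcol] at hf
  · rw [hrow, hcol, Set.empty_union]
    exact Or.inl (exists_embedding_top_fin_two ⟨hcd, Or.inr hcd₂⟩)
  · rw [hrow, hcol, Set.union_empty]
    exact Or.inl (exists_embedding_top_fin_two ⟨hab, Or.inl hab₁⟩)
  · rw [hrow, hcol, Set.insert_union, Set.singleton_union]
    refine Or.inr (exists_embedding_twoK2 ⟨hab, Or.inl hab₁⟩ ⟨hcd, Or.inr hcd₂⟩
      fun u hu v hv => ?_)
    rw [← hrow] at hu
    rw [← hcol] at hv
    exact ne_and_not_adj_of_mem_row_of_mem_col hPF hu.1 hv.1 hu.2 hv.2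

end gridGraph

def LocallyGrid {V : Type*} (Γ : SimpleGraph V) (n m : ℕ) : Prop :=
  ∀ v, Nonempty (Γ.induce (Γ.neighborSet v) ≃g gridGraph n m)

namespace LocallyGrid

variable {V : Type*} {Γ : SimpleGraph V} {n m : ℕ}

lemma exists_chart (hΓ : LocallyGrid Γ n m) (v : V) :
    ∃ e : gridGraph n m ↪g Γ, Set.range e = Γ.neighborSet v :=
  (hΓ v).some.exists_embedding_range_eq

lemma commonNeighbors_eq_pair (hΓ : LocallyGrid Γ n m) {w x y : V} (hwx : Γ.Adj w x)
    (hwy : Γ.Adj w y) (hxy : x ≠ y) (hnxy : ¬ Γ.Adj x y) :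
    ∃ c₁ c₂, c₁ ≠ c₂ ∧ ¬ Γ.Adj c₁ c₂ ∧
      ∀ t, Γ.Adj w t ∧ Γ.Adj x t ∧ Γ.Adj y t ↔ t = c₁ ∨ t = c₂ := by
  obtain ⟨e, he⟩ := hΓ.exists_chart w
  obtain ⟨X, rfl⟩ := e.exists_apply_eq_of_adj he hwx
  obtain ⟨Y, rfl⟩ := e.exists_apply_eq_of_adj he hwy
  obtain ⟨h₁, h₂⟩ := gridGraph.fst_ne_and_snd_ne_of_not_adj (ne_of_apply_ne e hxy)
    (e.map_adj_iff.not.1 hnxy)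
  have hcorners : ∀ T, Γ.Adj (e X) (e T) ∧ Γ.Adj (e Y) (e T) ↔ T = (X.1, Y.2) ∨ T = (Y.1, X.2) :=
    fun T => by rw [e.map_adj_iff, e.map_adj_iff, gridGraph.adj_and_adj_iff h₁ h₂]
  have hne : (X.1, Y.2) ≠ (Y.1, X.2) := fun h => h₁ (Prod.ext_iff.1 h).1
  have hnadj : ¬ (gridGraph n m).Adj (X.1, Y.2) (Y.1, X.2) := fun h => h.2.elim h₁ (Ne.symm h₂)
  refine ⟨e (X.1, Y.2), e (Y.1, X.2), e.injective.ne hne, e.map_adj_iff.not.2 hnadj,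
    fun t => ⟨fun ⟨hwt, hxyt⟩ => ?_, fun ht => ?_⟩⟩
  · obtain ⟨T, rfl⟩ := e.exists_apply_eq_of_adj he hwt
    simpa [e.injective.eq_iff] using (hcorners T).1 hxyt
  · rcases ht with rfl | rfl
    · exact ⟨e.adj_apply_of_range_eq he _, (hcorners _).2 (Or.inl rfl)⟩
    · exact ⟨e.adj_apply_of_range_eq he _, (hcorners _).2 (Or.inr rfl)⟩

lemma not_adj_of_forall_adj (hΓ : LocallyGrid Γ n m) {x y z w w' : V}
    (hxy : x ≠ y) (hxz : x ≠ z) (hyz : y ≠ z)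
    (nxy : ¬ Γ.Adj x y) (nxz : ¬ Γ.Adj x z) (nyz : ¬ Γ.Adj y z)
    (hw : Γ.Adj w x ∧ Γ.Adj w y ∧ Γ.Adj w z) (hw' : Γ.Adj w' x ∧ Γ.Adj w' y ∧ Γ.Adj w' z) :
    ¬ Γ.Adj w w' := by
  intro hww'
  obtain ⟨e, he⟩ := hΓ.exists_chart w
  obtain ⟨X, rfl⟩ := e.exists_apply_eq_of_adj he hw.1
  obtain ⟨Y, rfl⟩ := e.exists_apply_eq_of_adj he hw.2.1
  obtain ⟨Z, rfl⟩ := e.exists_apply_eq_of_adj he hw.2.2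
  obtain ⟨T, rfl⟩ := e.exists_apply_eq_of_adj he hww'
  have hcoords : ∀ {P Q}, e P ≠ e Q → ¬ Γ.Adj (e P) (e Q) → P.1 ≠ Q.1 ∧ P.2 ≠ Q.2 :=
    fun hne hnadj => gridGraph.fst_ne_and_snd_ne_of_not_adj (ne_of_apply_ne e hne)
      (e.map_adj_iff.not.1 hnadj)
  simp only [e.map_adj_iff] at hw'
  exact gridGraph.not_adj_all_of_pairwise_ne (hcoords hxy nxy) (hcoords hxz nxz) (hcoords hyz nyz)
    hw'

section Trace

open Finset

variable [DecidableRel Γ.Adj] {x y : V} {e : gridGraph n m ↪g Γ}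

def neighborTrace (e : gridGraph n m ↪g Γ) (x : V) : Finset (Fin n × Fin m) :=
  univ.filter fun p => Γ.Adj x (e p)

lemma mem_neighborTrace {p : Fin n × Fin m} : p ∈ neighborTrace e x ↔ Γ.Adj x (e p) := by
  simp [neighborTrace]

lemma fibresArePairs_neighborTrace (hΓ : LocallyGrid Γ n m) (hxy : x ≠ y) (hnxy : ¬ Γ.Adj x y)
    (he : Set.range e = Γ.neighborSet y) :
    FibresArePairs Prod.fst (neighborTrace e x) ∧ FibresArePairs Prod.snd (neighborTrace e x) := by
  refine gridGraph.fibresArePairs_of_forall_neighbors_eq_pair fun p hp => ?_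
  obtain ⟨c₁, c₂, hne, hnadj, hc⟩ := hΓ.commonNeighbors_eq_pair (mem_neighborTrace.1 hp).symm
    (e.adj_apply_of_range_eq he p).symm hxy hnxy
  obtain ⟨q₁, rfl⟩ := e.exists_apply_eq_of_adj he ((hc _).2 (Or.inl rfl)).2.2
  obtain ⟨q₂, rfl⟩ := e.exists_apply_eq_of_adj he ((hc _).2 (Or.inr rfl)).2.2
  refine ⟨q₁, q₂, ne_of_apply_ne e hne, e.map_adj_iff.not.1 hnadj, fun q => ?_⟩
  rw [mem_neighborTrace, ← e.map_adj_iff, ← e.injective.eq_iff, ← e.injective.eq_iff, ← hc,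
    and_comm]
  exact and_congr_right fun _ => (and_iff_left (e.adj_apply_of_range_eq he q)).symm

lemma dist_eq_two_of_mem_linesThrough (hnxy : ¬ Γ.Adj x y) (he : Set.range e = Γ.neighborSet y)
    {p : Fin n × Fin m} (hp : p ∈ gridGraph.linesThrough (neighborTrace e x))
    (hpF : p ∉ neighborTrace e x) : Γ.dist x (e p) = 2 := by
  obtain ⟨f, hf, hpf⟩ := gridGraph.exists_adj_of_mem_linesThrough hp hpF
  refine dist_eq_two_iff.2 ⟨?_, fun h => hpF (mem_neighborTrace.2 h), e f, ?_⟩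
  · rintro rfl
    exact hnxy (e.adj_apply_of_range_eq he p).symm
  · exact Γ.mem_commonNeighbors.2 ⟨mem_neighborTrace.1 hf, e.map_adj_iff.2 hpf⟩

/-- The `(n - 3) * (m - 3)` grid points off the lines through the trace include all neighbours of
`y` at distance 3 from `x`, and `hfar` says that these are as many: no room is left for `P`. -/
lemma mem_linesThrough_of_dist_eq_two (hnxy : ¬ Γ.Adj x y) (he : Set.range e = Γ.neighborSet y)
    (hrows : ((neighborTrace e x).image Prod.fst).card = 3)
    (hcols : ((neighborTrace e x).image Prod.snd).card = 3)
    (hfar : (univ.filter fun p => Γ.dist x (e p) = 3).card = (n - 3) * (m - 3))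
    {P : Fin n × Fin m} (hP : Γ.dist x (e P) = 2) :
    P ∈ gridGraph.linesThrough (neighborTrace e x) := by
  by_contra hPL
  have hsub : insert P (univ.filter fun p => Γ.dist x (e p) = 3) ⊆
      (gridGraph.linesThrough (neighborTrace e x))ᶜ := by
    refine insert_subset (mem_compl.2 hPL) fun p hp => mem_compl.2 fun hpL => ?_
    have h3 : Γ.dist x (e p) = 3 := (mem_filter.1 hp).2
    by_cases hpF : p ∈ neighborTrace e x
    · rw [dist_eq_one_iff_adj.2 (mem_neighborTrace.1 hpF)] at h3
      omega
    · rw [dist_eq_two_of_mem_linesThrough hnxy he hpL hpF] at h3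
      omega
  have := card_le_card hsub
  rw [card_insert_of_notMem (by simp [hP]), hfar, gridGraph.card_compl_linesThrough, hrows,
    hcols] at this
  omega

lemma image_setOf_mem_neighborTrace_and_adj (he : Set.range e = Γ.neighborSet y)
    (P : Fin n × Fin m) :
    e '' {q | q ∈ neighborTrace e x ∧ (gridGraph n m).Adj P q} =
      {w | Γ.Adj x w ∧ Γ.Adj y w ∧ Γ.Adj (e P) w} := by
  ext w
  constructor
  · rintro ⟨q, ⟨hq, hPq⟩, rfl⟩
    exact ⟨mem_neighborTrace.1 hq, e.adj_apply_of_range_eq he q, e.map_adj_iff.2 hPq⟩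
  · rintro ⟨hxw, hyw, hPw⟩
    obtain ⟨q, rfl⟩ := e.exists_apply_eq_of_adj he hyw
    exact ⟨q, ⟨mem_neighborTrace.2 hxw, e.map_adj_iff.1 hPw⟩, rfl⟩

end Trace

lemma nonempty_iso_of_adj (hΓ : LocallyGrid Γ n m) {x y z : V}
    (hfar : {t | Γ.Adj y t ∧ Γ.dist x t = 3}.ncard = (n - 3) * (m - 3))
    (hμ : {t | Γ.Adj x t ∧ Γ.Adj y t}.ncard = 6)
    (hxy : Γ.dist x y = 2) (hxz : Γ.dist x z = 2) (hyz : Γ.Adj y z) :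
    Nonempty (Γ.induce {w | Γ.Adj x w ∧ Γ.Adj y w ∧ Γ.Adj z w} ≃g (⊤ : SimpleGraph (Fin 2))) ∨
      Nonempty (Γ.induce {w | Γ.Adj x w ∧ Γ.Adj y w ∧ Γ.Adj z w} ≃g twoK2) := by
  classical
  obtain ⟨hne, hnadj, -⟩ := dist_eq_two_iff.1 hxy
  obtain ⟨e, he⟩ := hΓ.exists_chart y
  obtain ⟨P, rfl⟩ := e.exists_apply_eq_of_adj he hyz
  have hF : (neighborTrace e x).card = 6 := by
    rw [← hμ, Set.ext fun t => and_comm, e.ncard_setOf_adj_and he]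
    rfl
  obtain ⟨hfst, hsnd⟩ := fibresArePairs_neighborTrace hΓ hne hnadj he
  have hrows : ((neighborTrace e x).image Prod.fst).card = 3 := by
    have := hfst.card_eq_two_mul; omega
  have hcols : ((neighborTrace e x).image Prod.snd).card = 3 := by
    have := hsnd.card_eq_two_mul; omega
  have hPF : P ∉ neighborTrace e x := fun h =>
    (dist_eq_two_iff.1 hxz).2.1 (mem_neighborTrace.1 h)
  have hPL := mem_linesThrough_of_dist_eq_two hnadj he hrows hcols
    (by rw [← hfar, e.ncard_setOf_adj_and he]) hxz
  have hiso : ∀ {K : Type} {H : SimpleGraph K} (f : H ↪g gridGraph n m),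
      Set.range f = {q | q ∈ neighborTrace e x ∧ (gridGraph n m).Adj P q} →
      Nonempty (Γ.induce {w | Γ.Adj x w ∧ Γ.Adj y w ∧ Γ.Adj (e P) w} ≃g H) := fun f hf =>
    (e.comp f).nonempty_induce_iso_of_range_eq (by
      rw [Embedding.coe_comp, Set.range_comp, hf, image_setOf_mem_neighborTrace_and_adj he])
  rcases gridGraph.exists_embedding_range_eq_neighbors hfst hsnd hPF hPL with ⟨f, hf⟩ | ⟨f, hf⟩
  · exact Or.inl (hiso f hf)
  · exact Or.inr (hiso f hf)

lemma adj_of_nonempty_iso (hΓ : LocallyGrid Γ n m) {x y z : V}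
    (hμ : {t | Γ.Adj x t ∧ Γ.Adj y t}.ncard = 6)
    (hxy : Γ.dist x y = 2) (hxz : Γ.dist x z = 2)
    (hiso : Nonempty (Γ.induce {w | Γ.Adj x w ∧ Γ.Adj y w ∧ Γ.Adj z w} ≃g
        (⊤ : SimpleGraph (Fin 2))) ∨
      Nonempty (Γ.induce {w | Γ.Adj x w ∧ Γ.Adj y w ∧ Γ.Adj z w} ≃g twoK2)) :
    Γ.Adj y z := by
  obtain ⟨hne_xy, hnxy, -⟩ := dist_eq_two_iff.1 hxy
  obtain ⟨hne_xz, hnxz, -⟩ := dist_eq_two_iff.1 hxz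
  set S := {w | Γ.Adj x w ∧ Γ.Adj y w ∧ Γ.Adj z w}
  obtain ⟨hcard, u, hu, v, hv, huv⟩ : S.ncard ≠ 6 ∧ ∃ u ∈ S, ∃ v ∈ S, Γ.Adj u v := by
    rcases hiso with ⟨⟨φ⟩⟩ | ⟨⟨φ⟩⟩
    · refine ⟨by simp [ncard_eq_of_induce_iso φ], exists_adj_of_induce_iso φ (a := 0) (b := 1) ?_⟩
      simp
    · refine ⟨by simp [ncard_eq_of_induce_iso φ], exists_adj_of_induce_iso φ (a := 0) (b := 1) ?_⟩
      exact ⟨by decide, rfl⟩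
  by_contra hnyz
  by_cases hyz : y = z
  · subst hyz
    exact hcard (by simpa only [S, and_self] using hμ)
  · exact hΓ.not_adj_of_forall_adj hne_xy hne_xz hyz hnxy hnxz hnyz
      ⟨hu.1.symm, hu.2.1.symm, hu.2.2.symm⟩ ⟨hv.1.symm, hv.2.1.symm, hv.2.2.symm⟩ huv

end LocallyGrid

theorem adjacency_via_triple_mu_graph_general (n m : ℕ)
    (V : Type) (Γ : SimpleGraph V)
    (hloc : ∀ x : V, Nonempty ((Γ.induce (Γ.neighborSet x)) ≃g gridGraph n m))
    (hb2 : ∀ x y : V, Γ.dist x y = 2 →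
      {z : V | Γ.Adj y z ∧ Γ.dist x z = 3}.ncard = (n - 3) * (m - 3))
    (hc2 : ∀ x y : V, Γ.dist x y = 2 →
      {z : V | Γ.Adj x z ∧ Γ.Adj y z}.ncard = 6)
    (x y z : V) (hy : Γ.dist x y = 2) (hz : Γ.dist x z = 2) :
    Γ.Adj y z ↔
      (Nonempty ((Γ.induce {w : V | Γ.Adj x w ∧ Γ.Adj y w ∧ Γ.Adj z w}) ≃g
          (⊤ : SimpleGraph (Fin 2))) ∨
       Nonempty ((Γ.induce {w : V | Γ.Adj x w ∧ Γ.Adj y w ∧ Γ.Adj z w}) ≃g twoK2)) :=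
  ⟨LocallyGrid.nonempty_iso_of_adj hloc (hb2 x y hy) (hc2 x y hy) hy hz,
    LocallyGrid.adj_of_nonempty_iso hloc (hc2 x y hy) hy hz⟩

/-- Under hypotheses (H): two vertices `y, z` at distance 2 from `x` are
adjacent iff the subgraph induced on the common neighbours of `x`, `y` and `z` is a single
edge `K₂` or a disjoint union of two edges `2·K₂`. -/
theorem adjacency_via_triple_mu_graph (n m : ℕ) (hm : 3 ≤ m) (hmn : m ≤ n)
    (V : Type) [Fintype V] (Γ : SimpleGraph V)
    (hconn : Γ.Connected)
    (hdiam : ∃ x y : V, 2 ≤ Γ.dist x y)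
    (hloc : ∀ x : V, Nonempty ((Γ.induce (Γ.neighborSet x)) ≃g gridGraph n m))
    (hb0 : ∀ x : V, {y : V | Γ.Adj x y}.ncard = n * m)
    (hb1 : ∀ x y : V, Γ.Adj x y →
      {z : V | Γ.Adj y z ∧ Γ.dist x z = 2}.ncard = (n - 1) * (m - 1))
    (hb2 : ∀ x y : V, Γ.dist x y = 2 →
      {z : V | Γ.Adj y z ∧ Γ.dist x z = 3}.ncard = (n - 3) * (m - 3))
    (hc2 : ∀ x y : V, Γ.dist x y = 2 →
      {z : V | Γ.Adj x z ∧ Γ.Adj y z}.ncard = 6)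
    (x y z : V) (hy : Γ.dist x y = 2) (hz : Γ.dist x z = 2) :
    Γ.Adj y z ↔
      (Nonempty ((Γ.induce {w : V | Γ.Adj x w ∧ Γ.Adj y w ∧ Γ.Adj z w}) ≃g
          (⊤ : SimpleGraph (Fin 2))) ∨
       Nonempty ((Γ.induce {w : V | Γ.Adj x w ∧ Γ.Adj y w ∧ Γ.Adj z w}) ≃g twoK2)) :=
  adjacency_via_triple_mu_graph_general n m V Γ hloc hb2 hc2 x y z hy hz
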